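/- arXiv:1705.06336 — 6 statements merged into one kernel-verified Lean document; each statement's English description precedes it below -/
import Mathlib

section
/- Let s ≥ 0, r > 1, let σ ∈ {+1, −1}, set x* = σ √(r − 1) and p = r − (r − 1) − σ s √(r − 1). Then (x*, −x*) is an equilibrium of the asymmetric planar system ẋ = −x − y, ẏ = r y + p x + s x² − x² y, the Jacobian there has trace zero and determinant 2(r−1) + σ s √(r−1), and whenever 2(r−1) + σ s √(r−1) > 0 its eigenvalues are the purely imaginary pair ± i √(2(r−1) + σ s √(r−1)). In particular, the Hopf frequency at P₁ (σ = +1) is ω₁* = √(2(r−1) + s√(r−1)) and at P₂ (σ = −1) it is ω₂* = √(2(r−1) − s√(r−1)). -/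
open Matrix

/-!
At `(x, -x)` the first component of the field vanishes identically and the second equals
`x (x² + s x - (r - p))`, so these points are equilibria on the stated quadratic. The
Jacobian there has trace `r - 1 - x²` and, on that quadratic, determinant `x² + r - p`. With
`x² = r - 1` and `r - p = (r - 1) + s x` the trace vanishes and the determinant is
`2(r - 1) + σ s √(r - 1)`; a real `2 × 2` matrix of trace `0` and determinant `ω² ≥ 0` has
characteristic polynomial `X² + ω²`, whose complex roots are `± i ω`.
-/

theorem Complex.sq_add_ofReal_sq_eq_zero_iff (z : ℂ) (ω : ℝ) :
    z ^ 2 + (ω : ℂ) ^ 2 = 0 ↔ z = I * ω ∨ z = -(I * ω) := by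
  rw [← sq_eq_sq_iff_eq_or_eq_neg, mul_pow, I_sq]
  constructor <;> intro h <;> linear_combination h

theorem Matrix.isRoot_charpoly_map_ofReal_iff_of_trace_eq_zero {M : Matrix (Fin 2) (Fin 2) ℝ}
    (htr : M.trace = 0) (hdet : 0 ≤ M.det) (z : ℂ) :
    (M.map Complex.ofReal).charpoly.IsRoot z ↔
      z = Complex.I * (Real.sqrt M.det : ℝ) ∨ z = -(Complex.I * (Real.sqrt M.det : ℝ)) := by
  have htrC : (M.map Complex.ofReal).trace = 0 := by
    rw [trace_fin_two] at htr ⊢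
    simp only [map_apply]
    exact_mod_cast htr
  have hdetC : (M.map Complex.ofReal).det = ((Real.sqrt M.det : ℝ) : ℂ) ^ 2 := by
    rw [← Complex.ofReal_pow, Real.sq_sqrt hdet, det_fin_two, det_fin_two]
    push_cast [map_apply]
    ring
  rw [← Complex.sq_add_ofReal_sq_eq_zero_iff, charpoly_fin_two, htrC, hdetC]
  simp [Polynomial.IsRoot.def]

namespace AsymmetricPlanar

def field (p r s : ℝ) (v : Fin 2 → ℝ) : Fin 2 → ℝ :=
  ![-(v 0) - v 1, r * v 1 + p * v 0 + s * (v 0) ^ 2 - (v 0) ^ 2 * v 1]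

def jacobian (p r s x y : ℝ) : Matrix (Fin 2) (Fin 2) ℝ :=
  !![-1, -1; p + 2 * s * x - 2 * x * y, r - x ^ 2]

variable {p r s : ℝ}

theorem hasFDerivAt_field (v : Fin 2 → ℝ) :
    HasFDerivAt (field p r s)
      (LinearMap.toContinuousLinearMap (jacobian p r s (v 0) (v 1)).mulVecLin) v := by
  have h0 := (ContinuousLinearMap.proj (R := ℝ) (φ := fun _ : Fin 2 => ℝ) 0).hasFDerivAt (x := v)
  have h1 := (ContinuousLinearMap.proj (R := ℝ) (φ := fun _ : Fin 2 => ℝ) 1).hasFDerivAt (x := v)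
  have hsq := h0.mul h0
  refine hasFDerivAt_pi'' fun i => ?_
  fin_cases i
  · refine (h0.neg.sub h1).congr_fderiv ?_
    ext w
    simp [jacobian, dotProduct, Fin.sum_univ_two]
    ring
  · refine ((((h1.const_mul r).add (h0.const_mul p)).add (hsq.const_mul s)).sub
      (hsq.mul h1)).congr_fderiv ?_ |>.congr_of_eventuallyEq (.of_forall fun w => ?_)
    · ext w
      simp [jacobian, dotProduct, Fin.sum_univ_two]
      ring
    · simp [field, sq]

theorem field_diag_eq_zero {x : ℝ} (h : x ^ 2 + s * x = r - p) : field p r s ![x, -x] = 0 := by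
  ext i
  fin_cases i
  · simp [field]
  · simp only [field, Fin.isValue, cons_val_zero, cons_val_one, cons_val_fin_one,
      Fin.mk_one, Pi.zero_apply]
    linear_combination x * h

theorem trace_jacobian_diag (x : ℝ) : (jacobian p r s x (-x)).trace = r - 1 - x ^ 2 := by
  rw [jacobian, trace_fin_two_of]
  ring

theorem det_jacobian_diag {x : ℝ} (h : x ^ 2 + s * x = r - p) :
    (jacobian p r s x (-x)).det = x ^ 2 + r - p := by
  rw [jacobian, det_fin_two_of]
  linear_combination 2 * h

end AsymmetricPlanar

open AsymmetricPlanar in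
theorem jacobian_P1_P2_hopf_general (r s σ : ℝ) (hr : 1 < r)
    (hσ : σ = 1 ∨ σ = -1)
    (xstar p : ℝ)
    (hx : xstar = σ * Real.sqrt (r - 1))
    (hp : p = r - (r - 1) - σ * s * Real.sqrt (r - 1))
    (F : (Fin 2 → ℝ) → (Fin 2 → ℝ))
    (hF : ∀ v : Fin 2 → ℝ,
      F v = ![-(v 0) - v 1, r * v 1 + p * v 0 + s * (v 0) ^ 2 - (v 0) ^ 2 * v 1])
    (M : Matrix (Fin 2) (Fin 2) ℝ)
    (hM : M = !![-1, -1; p + 2 * s * xstar + 2 * xstar ^ 2, r - xstar ^ 2]) :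
    F ![xstar, -xstar] = 0 ∧
    (∀ v : Fin 2 → ℝ, fderiv ℝ F ![xstar, -xstar] v = M.mulVec v) ∧
    M.trace = 0 ∧
    M.det = 2 * (r - 1) + σ * s * Real.sqrt (r - 1) ∧
    (0 < 2 * (r - 1) + σ * s * Real.sqrt (r - 1) →
      ∀ lam : ℂ, (M.map (Complex.ofReal)).charpoly.IsRoot lam ↔
        lam = Complex.I * (Real.sqrt (2 * (r - 1) + σ * s * Real.sqrt (r - 1)) : ℝ) ∨
        lam = -(Complex.I * (Real.sqrt (2 * (r - 1) + σ * s * Real.sqrt (r - 1)) : ℝ))) := by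
  have hσ2 : σ ^ 2 = 1 := by rcases hσ with rfl | rfl <;> norm_num
  have hx2 : xstar ^ 2 = r - 1 := by
    rw [hx, mul_pow, hσ2, one_mul, Real.sq_sqrt (by linarith)]
  have heq : xstar ^ 2 + s * xstar = r - p := by
    rw [hp, hx2, hx]
    ring
  have hFfield : F = field p r s := funext hF
  have hMjac : M = jacobian p r s xstar (-xstar) := by
    rw [hM, jacobian]
    ring_nf
  have htr : M.trace = 0 := by
    rw [hMjac, trace_jacobian_diag, hx2]
    ring
  have hdet : M.det = 2 * (r - 1) + σ * s * Real.sqrt (r - 1) := by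
    rw [hMjac, det_jacobian_diag heq, hx2, hp]
    ring
  refine ⟨hFfield ▸ field_diag_eq_zero heq, fun v => ?_, htr, hdet, fun hpos => ?_⟩
  · rw [hFfield, (hasFDerivAt_field _).fderiv, hMjac]
    rfl
  · rw [← hdet] at hpos ⊢
    exact isRoot_charpoly_map_ofReal_iff_of_trace_eq_zero htr hpos.le

/-- Hopf frequencies at the nontrivial equilibria `P₁` (σ = +1) and `P₂`
(σ = −1) of the asymmetric planar system
`ẋ = −x − y, ẏ = r y + p x + s x² − x² y`: with `x* = σ √(r−1)` and
`p = r − (r−1) − σ s √(r−1)`, the point `(x*, −x*)` is an equilibrium, the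
Jacobian there has trace zero and determinant `2(r−1) + σ s √(r−1)`, and when
this determinant is positive the eigenvalues are `± i √(2(r−1) + σ s √(r−1))`. -/
theorem jacobian_P1_P2_hopf (r s σ : ℝ) (hs : 0 ≤ s) (hr : 1 < r)
    (hσ : σ = 1 ∨ σ = -1)
    (xstar p : ℝ)
    (hx : xstar = σ * Real.sqrt (r - 1))
    (hp : p = r - (r - 1) - σ * s * Real.sqrt (r - 1))
    (F : (Fin 2 → ℝ) → (Fin 2 → ℝ))
    (hF : ∀ v : Fin 2 → ℝ,
      F v = ![-(v 0) - v 1, r * v 1 + p * v 0 + s * (v 0) ^ 2 - (v 0) ^ 2 * v 1])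
    (M : Matrix (Fin 2) (Fin 2) ℝ)
    (hM : M = !![-1, -1; p + 2 * s * xstar + 2 * xstar ^ 2, r - xstar ^ 2]) :
    F ![xstar, -xstar] = 0 ∧
    (∀ v : Fin 2 → ℝ, fderiv ℝ F ![xstar, -xstar] v = M.mulVec v) ∧
    M.trace = 0 ∧
    M.det = 2 * (r - 1) + σ * s * Real.sqrt (r - 1) ∧
    (0 < 2 * (r - 1) + σ * s * Real.sqrt (r - 1) →
      ∀ lam : ℂ, (M.map (Complex.ofReal)).charpoly.IsRoot lam ↔
        lam = Complex.I * (Real.sqrt (2 * (r - 1) + σ * s * Real.sqrt (r - 1)) : ℝ) ∨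
        lam = -(Complex.I * (Real.sqrt (2 * (r - 1) + σ * s * Real.sqrt (r - 1)) : ℝ))) :=
  jacobian_P1_P2_hopf_general r s σ hr hσ xstar p hx hp F hF M hM
end

section
/- Let s > 0 and (p, r) = (1 + s²/2, 1 + s²/4). Then the point (−s/2, s/2) is an equilibrium of the asymmetric planar system ẋ = −x − y, ẏ = r y + p x + s x² − x² y, and the Jacobian matrix there equals [[−1, −1], [1, 1]], which is nonzero and nilpotent; so 0 is an eigenvalue of algebraic multiplicity two and geometric multiplicity one. Hence Q₁ = (1 + s²/2, 1 + s²/4) is a Bogdanov–Takens point of the equilibrium P₁. -/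
/-!
Along the diagonal `y = -x` the field is `(0, x (x² + s x - (r - p)))`, so `(x, -x)` is an
equilibrium as soon as `x² + s x = r - p`; at `x = -s/2` and the given `(p, r)` this holds.
The Jacobian at `(x, y)` is `[[-1, -1], [p + 2 s x - 2 x y, r - x²]]`, which at that point is
`[[-1, -1], [1, 1]]`: trace and determinant vanish, so its characteristic polynomial is `X²`
and Cayley–Hamilton makes it square-zero. A nonzero square-zero endomorphism of a plane has
its range inside its kernel, and rank–nullity forces both to be lines.
-/

open Matrix Polynomial

theorem LinearMap.finrank_ker_eq_one_of_comp_self_eq_zero {K V : Type*} [Field K]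
    [AddCommGroup V] [Module K V] (hV : Module.finrank K V = 2) {f : V →ₗ[K] V}
    (hf : f ≠ 0) (hff : f ∘ₗ f = 0) : Module.finrank K (LinearMap.ker f) = 1 := by
  have : FiniteDimensional K V := Module.finite_of_finrank_eq_succ hV
  have hrange_le_ker : LinearMap.range f ≤ LinearMap.ker f :=
    LinearMap.range_le_ker_iff.mpr hff
  have hrange_pos : 0 < Module.finrank K (LinearMap.range f) :=
    Nat.pos_of_ne_zero (Submodule.finrank_eq_zero.not.mpr (LinearMap.range_eq_bot.not.mpr hf))
  have hrank_le_nullity := Submodule.finrank_mono hrange_le_ker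
  have hrank_nullity := f.finrank_range_add_finrank_ker
  omega

noncomputable def asymField (p r s : ℝ) (v : Fin 2 → ℝ) : Fin 2 → ℝ :=
  ![-(v 0) - v 1, r * v 1 + p * v 0 + s * (v 0) ^ 2 - (v 0) ^ 2 * v 1]

noncomputable def asymJacobian (p r s : ℝ) (v : Fin 2 → ℝ) : Matrix (Fin 2) (Fin 2) ℝ :=
  !![-1, -1; p + 2 * s * v 0 - 2 * v 0 * v 1, r - v 0 ^ 2]

theorem asymField_eq_zero {p r s x y : ℝ} (hxy : x + y = 0) (hx : x ^ 2 + s * x = r - p) :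
    asymField p r s ![x, y] = 0 := by
  obtain rfl : y = -x := by linear_combination hxy
  ext i
  fin_cases i
  · simp [asymField]
  · simp only [asymField, Fin.isValue, cons_val_zero, cons_val_one, cons_val_fin_one, sub_self,
      mul_neg, sub_neg_eq_add, Fin.mk_one, Pi.zero_apply]
    linear_combination x * hx

theorem hasFDerivAt_asymField (p r s : ℝ) (v : Fin 2 → ℝ) :
    HasFDerivAt (asymField p r s) (asymJacobian p r s v).mulVecLin.toContinuousLinearMap v := by
  refine hasFDerivAt_pi'.mpr fun i ↦ ?_
  have h0 : HasFDerivAt (fun w : Fin 2 → ℝ ↦ w 0) (ContinuousLinearMap.proj (R := ℝ) 0) v :=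
    hasFDerivAt_apply 0 v
  have h1 : HasFDerivAt (fun w : Fin 2 → ℝ ↦ w 1) (ContinuousLinearMap.proj (R := ℝ) 1) v :=
    hasFDerivAt_apply 1 v
  fin_cases i
  · refine (h0.neg.sub h1).congr_fderiv ?_
    ext w : 1
    simp only [Fin.isValue, _root_.sub_apply, _root_.neg_apply, ContinuousLinearMap.proj_apply,
      Fin.zero_eta, asymJacobian, ContinuousLinearMap.comp_apply,
      LinearMap.coe_toContinuousLinearMap', mulVecBilin_apply, cons_mulVec, dotProduct,
      Fin.sum_univ_two, cons_val_zero, neg_mul, one_mul, cons_val_one, cons_val_fin_one,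
      empty_mulVec]
    ring
  · refine ((((h1.const_mul r).add (h0.const_mul p)).add ((h0.pow 2).const_mul s)).sub
      ((h0.pow 2).mul h1)).congr_fderiv ?_
    ext w : 1
    simp only [Fin.isValue, Nat.add_one_sub_one, pow_one, nsmul_eq_mul, Nat.cast_ofNat,
      _root_.sub_apply, _root_.add_apply, _root_.smul_apply, ContinuousLinearMap.proj_apply,
      smul_eq_mul, Fin.mk_one, asymJacobian, ContinuousLinearMap.comp_apply,
      LinearMap.coe_toContinuousLinearMap', mulVecBilin_apply, cons_mulVec, dotProduct,
      Fin.sum_univ_two, cons_val_zero, neg_mul, one_mul, cons_val_one, cons_val_fin_one,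
      empty_mulVec]
    ring

theorem asymJacobian_Q1 (s : ℝ) :
    asymJacobian (1 + s ^ 2 / 2) (1 + s ^ 2 / 4) s ![-s / 2, s / 2] = !![-1, -1; 1, 1] := by
  ext i j
  fin_cases i <;> fin_cases j <;> simp [asymJacobian] <;> ring

theorem Matrix.sq_eq_zero_of_charpoly_eq_X_sq {R n : Type*} [CommRing R] [Fintype n]
    [DecidableEq n] {M : Matrix n n R} (h : M.charpoly = X ^ 2) : M ^ 2 = 0 := by
  simpa [h] using aeval_self_charpoly M

theorem Matrix.finrank_ker_mulVecLin_eq_one_of_sq_eq_zero {K : Type*} [Field K]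
    {M : Matrix (Fin 2) (Fin 2) K} (hM : M ≠ 0) (hM2 : M ^ 2 = 0) :
    Module.finrank K (LinearMap.ker M.mulVecLin) = 1 := by
  refine LinearMap.finrank_ker_eq_one_of_comp_self_eq_zero (by simp) ?_ ?_
  · rw [← toLin'_apply']
    exact toLin'.map_ne_zero_iff.mpr hM
  · rw [← mulVecLin_mul, ← sq, hM2, mulVecLin_zero]

theorem BT_point_Q1_general (s : ℝ)
    (p r : ℝ) (hp : p = 1 + s ^ 2 / 2) (hr : r = 1 + s ^ 2 / 4)
    (F : (Fin 2 → ℝ) → (Fin 2 → ℝ))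
    (hF : ∀ v : Fin 2 → ℝ,
      F v = ![-(v 0) - v 1, r * v 1 + p * v 0 + s * (v 0) ^ 2 - (v 0) ^ 2 * v 1])
    (M : Matrix (Fin 2) (Fin 2) ℝ) (hM : M = !![-1, -1; 1, 1]) :
    F ![-s / 2, s / 2] = 0 ∧
    (∀ v : Fin 2 → ℝ, fderiv ℝ F ![-s / 2, s / 2] v = M.mulVec v) ∧
    M ≠ 0 ∧ M ^ 2 = 0 ∧
    M.charpoly = X ^ 2 ∧
    Module.finrank ℝ (LinearMap.ker M.mulVecLin) = 1 := by
  obtain rfl : F = asymField p r s := funext hF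
  subst hp hr hM
  have hcharpoly : (!![-1, -1; 1, 1] : Matrix (Fin 2) (Fin 2) ℝ).charpoly = X ^ 2 := by
    rw [charpoly_fin_two, trace_fin_two, det_fin_two]
    norm_num
  have hM0 : (!![-1, -1; 1, 1] : Matrix (Fin 2) (Fin 2) ℝ) ≠ 0 := fun h ↦ by
    simpa using congrFun (congrFun h 0) 0
  have hM2 := sq_eq_zero_of_charpoly_eq_X_sq hcharpoly
  refine ⟨asymField_eq_zero (by ring) (by ring), fun v ↦ ?_, hM0, hM2, hcharpoly,
    finrank_ker_mulVecLin_eq_one_of_sq_eq_zero hM0 hM2⟩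
  rw [(hasFDerivAt_asymField _ _ _ _).fderiv, asymJacobian_Q1]
  rfl

/-- Bogdanov–Takens point `Q₁ = (1 + s²/2, 1 + s²/4)`: for the asymmetric
planar system `ẋ = −x − y, ẏ = r y + p x + s x² − x² y` with
`(p, r) = (1 + s²/2, 1 + s²/4)` and `s > 0`, the point `(−s/2, s/2)` is an
equilibrium (it is `P₁`), the Jacobian there equals `[[−1,−1],[1,1]]`, which
is nonzero and nilpotent; its characteristic polynomial is `λ²` and its kernel
is one-dimensional (geometric multiplicity one). -/
theorem BT_point_Q1 (s : ℝ) (hs : 0 < s)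
    (p r : ℝ) (hp : p = 1 + s ^ 2 / 2) (hr : r = 1 + s ^ 2 / 4)
    (F : (Fin 2 → ℝ) → (Fin 2 → ℝ))
    (hF : ∀ v : Fin 2 → ℝ,
      F v = ![-(v 0) - v 1, r * v 1 + p * v 0 + s * (v 0) ^ 2 - (v 0) ^ 2 * v 1])
    (M : Matrix (Fin 2) (Fin 2) ℝ) (hM : M = !![-1, -1; 1, 1]) :
    F ![-s / 2, s / 2] = 0 ∧
    (∀ v : Fin 2 → ℝ, fderiv ℝ F ![-s / 2, s / 2] v = M.mulVec v) ∧
    M ≠ 0 ∧ M ^ 2 = 0 ∧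
    M.charpoly = X ^ 2 ∧
    Module.finrank ℝ (LinearMap.ker M.mulVecLin) = 1 :=
  BT_point_Q1_general s p r hp hr F hF M hM
end

section
/- Let δ ≥ 0, α = √(2/(9 + 2δ²)), and for each sign σ ∈ {+1, −1} define u_σ(t) = 3σα / (cosh t + σ α δ) and v_σ(t) = −3σα sinh t / (cosh t + σ α δ)². Then (u_σ, v_σ) is defined for all t ∈ ℝ (the denominator never vanishes), satisfies the Hamiltonian system u̇ = v, v̇ = u − δ u² − u³ for all t, lies on the zero level set of H(u,v) = v²/2 − u²/2 + δ u³/3 + u⁴/4 (i.e., H(u_σ(t), v_σ(t)) = 0 for all t), and satisfies (u_σ(t), v_σ(t)) → (0,0) as t → +∞ and as t → −∞. Thus Γ₀⁺ and Γ₀⁻ are a pair of homoclinic orbits to the saddle at the origin. -/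
/-!
Write `D = cosh t + b`. For `u = a / D` and `v = -a sinh t / D²`, the relation
`sinh² t = (D - b)² - 1` turns both `v̇ - (u - δu² - u³)` and `H(u, v)` into combinations of
`3b - δa` and `a² - 2(1 - b²)`, so both vanish once `3b = δa` and `a² = 2(1 - b²)`.
The choice `a = 3σα`, `b = σαδ` meets these, and then `b² < 1` keeps `D` positive.
As `t → ±∞`, `u → 0` because `cosh t → ∞`, and on the zero level set `v² = u² - 2δu³/3 - u⁴/2`,
so `v → 0` as well.
-/

open Real Filter Topology

lemma tendsto_cosh_atTop : Tendsto cosh atTop atTop :=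
  tendsto_atTop_mono (fun t => by rw [cosh_eq]; linarith [exp_pos (-t)])
    (tendsto_exp_atTop.atTop_div_const two_pos)

lemma tendsto_cosh_atBot : Tendsto cosh atBot atTop := by
  simpa [Function.comp_def] using tendsto_cosh_atTop.comp tendsto_neg_atBot_atTop

noncomputable def hamiltonian (δ u v : ℝ) : ℝ :=
  v ^ 2 / 2 - u ^ 2 / 2 + δ * u ^ 3 / 3 + u ^ 4 / 4

lemma tendsto_zero_of_hamiltonian_eq_zero {ι : Type*} {l : Filter ι} {δ : ℝ} {u v : ι → ℝ}
    (hH : ∀ᶠ i in l, hamiltonian δ (u i) (v i) = 0) (hu : Tendsto u l (𝓝 0)) :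
    Tendsto v l (𝓝 0) := by
  have hv_sq : Tendsto (fun i => v i ^ 2) l (𝓝 0) := by
    have hpoly : Tendsto (fun i => u i ^ 2 - 2 * δ * u i ^ 3 / 3 - u i ^ 4 / 2) l (𝓝 0) := by
      simpa using ((hu.pow 2).sub ((hu.pow 3).const_mul (2 * δ) |>.div_const 3)).sub
        ((hu.pow 4).div_const 2)
    refine hpoly.congr' (hH.mono fun i hi => ?_)
    unfold hamiltonian at hi
    linear_combination -2 * hi
  have h_abs := (continuous_sqrt.tendsto 0).comp hv_sq
  simp only [Function.comp_def, sqrt_sq_eq_abs, sqrt_zero] at h_abs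
  exact tendsto_zero_iff_abs_tendsto_zero v |>.mpr h_abs

noncomputable def orbitU (a b t : ℝ) : ℝ := a / (cosh t + b)

noncomputable def orbitV (a b t : ℝ) : ℝ := -(a * sinh t) / (cosh t + b) ^ 2

section Orbit

variable {a b δ : ℝ}

lemma sq_lt_one_of_sq_eq (ha₀ : a ≠ 0) (ha : a ^ 2 = 2 * (1 - b ^ 2)) : b ^ 2 < 1 := by
  nlinarith [pow_pos (abs_pos.mpr ha₀) 2, sq_abs a]

lemma cosh_add_pos_of_sq_lt_one (hb : b ^ 2 < 1) (t : ℝ) : 0 < cosh t + b := by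
  nlinarith [one_le_cosh t]

lemma hasDerivAt_orbitU {t : ℝ} (ht : cosh t + b ≠ 0) :
    HasDerivAt (orbitU a b) (orbitV a b t) t := by
  refine ((hasDerivAt_const t a).div ((hasDerivAt_cosh t).add_const b) ht).congr_deriv ?_
  unfold orbitV
  ring

variable (hab : 3 * b = δ * a) (ha : a ^ 2 = 2 * (1 - b ^ 2))
include hab ha

lemma hasDerivAt_orbitV {t : ℝ} (ht : cosh t + b ≠ 0) :
    HasDerivAt (orbitV a b) (orbitU a b t - δ * orbitU a b t ^ 2 - orbitU a b t ^ 3) t := by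
  refine (((hasDerivAt_sinh t).const_mul a).neg.div
    (((hasDerivAt_cosh t).add_const b).pow 2) (pow_ne_zero 2 ht)).congr_deriv ?_
  simp only [orbitU, Pi.pow_apply, Pi.neg_apply, Nat.cast_ofNat]
  field_simp
  linear_combination (-2 * a * (cosh t + b)) * cosh_sq_sub_sinh_sq t
    - a * (cosh t + b) ^ 2 * hab + a * (cosh t + b) * ha

lemma hamiltonian_orbit {t : ℝ} (ht : cosh t + b ≠ 0) :
    hamiltonian δ (orbitU a b t) (orbitV a b t) = 0 := by
  unfold hamiltonian orbitU orbitV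
  field_simp
  linear_combination (-12 * a ^ 2) * cosh_sq_sub_sinh_sq t
    - 8 * a ^ 2 * (cosh t + b) * hab + 6 * a ^ 2 * ha

lemma tendsto_orbit {l : Filter ℝ} (hl : Tendsto cosh l atTop) :
    Tendsto (fun t => (orbitU a b t, orbitV a b t)) l (𝓝 (0, 0)) := by
  have hD : Tendsto (fun t => cosh t + b) l atTop := tendsto_atTop_add_const_right _ b hl
  have hu : Tendsto (orbitU a b) l (𝓝 0) := tendsto_const_nhds.div_atTop hD
  have hH : ∀ᶠ t in l, hamiltonian δ (orbitU a b t) (orbitV a b t) = 0 :=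
    (hD.eventually_gt_atTop 0).mono fun t ht => hamiltonian_orbit hab ha ht.ne'
  exact hu.prodMk_nhds (tendsto_zero_of_hamiltonian_eq_zero hH hu)

end Orbit

lemma orbit_amplitude_sq {δ α σ : ℝ} (hα : α = √(2 / (9 + 2 * δ ^ 2))) (hσ : σ = 1 ∨ σ = -1) :
    (3 * σ * α) ^ 2 = 2 * (1 - (σ * α * δ) ^ 2) := by
  have hσ_sq : σ ^ 2 = 1 := by rcases hσ with rfl | rfl <;> norm_num
  have hα_sq : α ^ 2 * (9 + 2 * δ ^ 2) = 2 := by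
    rw [hα, sq_sqrt (by positivity)]
    field_simp
  linear_combination (9 * α ^ 2 + 2 * α ^ 2 * δ ^ 2) * hσ_sq + hα_sq

theorem homoclinic_orbits_P0_general (δ : ℝ)
    (α : ℝ) (hα : α = Real.sqrt (2 / (9 + 2 * δ ^ 2)))
    (σ : ℝ) (hσ : σ = 1 ∨ σ = -1)
    (u v : ℝ → ℝ)
    (hu : ∀ t : ℝ, u t = 3 * σ * α / (Real.cosh t + σ * α * δ))
    (hv : ∀ t : ℝ, v t = -(3 * σ * α * Real.sinh t) / (Real.cosh t + σ * α * δ) ^ 2) :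
    (∀ t : ℝ, Real.cosh t + σ * α * δ ≠ 0) ∧
    (∀ t : ℝ, HasDerivAt u (v t) t) ∧
    (∀ t : ℝ, HasDerivAt v (u t - δ * (u t) ^ 2 - (u t) ^ 3) t) ∧
    (∀ t : ℝ, (v t) ^ 2 / 2 - (u t) ^ 2 / 2 + δ * (u t) ^ 3 / 3 + (u t) ^ 4 / 4 = 0) ∧
    Tendsto (fun t => (u t, v t)) atTop (nhds (0, 0)) ∧
    Tendsto (fun t => (u t, v t)) atBot (nhds (0, 0)) := by
  obtain rfl : u = orbitU (3 * σ * α) (σ * α * δ) := funext hu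
  obtain rfl : v = orbitV (3 * σ * α) (σ * α * δ) := funext hv
  have hab : 3 * (σ * α * δ) = δ * (3 * σ * α) := by ring
  have ha := orbit_amplitude_sq hα hσ
  have ha₀ : 3 * σ * α ≠ 0 := by
    have hα₀ : 0 < α := hα ▸ sqrt_pos.mpr (by positivity)
    rcases hσ with rfl | rfl <;> simp [hα₀.ne']
  have hD t : cosh t + σ * α * δ ≠ 0 :=
    (cosh_add_pos_of_sq_lt_one (sq_lt_one_of_sq_eq ha₀ ha) t).ne'
  exact ⟨hD, fun t => hasDerivAt_orbitU (hD t), fun t => hasDerivAt_orbitV hab ha (hD t),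
    fun t => hamiltonian_orbit hab ha (hD t), tendsto_orbit hab ha tendsto_cosh_atTop,
    tendsto_orbit hab ha tendsto_cosh_atBot⟩

/-- The pair of explicit homoclinic orbits `Γ₀^±` to the saddle at the origin
of the Hamiltonian system `u̇ = v, v̇ = u − δ u² − u³` (μ = 1 case):
for `δ ≥ 0`, `α = √(2/(9+2δ²))`, and each sign `σ = ±1`, the curve
`u_σ(t) = 3σα/(cosh t + σαδ)`, `v_σ(t) = −3σα sinh t/(cosh t + σαδ)²` is
globally defined, solves the system, lies in the zero level set of the
Hamiltonian, and converges to the origin as `t → ±∞`. -/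
theorem homoclinic_orbits_P0 (δ : ℝ) (hδ : 0 ≤ δ)
    (α : ℝ) (hα : α = Real.sqrt (2 / (9 + 2 * δ ^ 2)))
    (σ : ℝ) (hσ : σ = 1 ∨ σ = -1)
    (u v : ℝ → ℝ)
    (hu : ∀ t : ℝ, u t = 3 * σ * α / (Real.cosh t + σ * α * δ))
    (hv : ∀ t : ℝ, v t = -(3 * σ * α * Real.sinh t) / (Real.cosh t + σ * α * δ) ^ 2) :
    (∀ t : ℝ, Real.cosh t + σ * α * δ ≠ 0) ∧
    (∀ t : ℝ, HasDerivAt u (v t) t) ∧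
    (∀ t : ℝ, HasDerivAt v (u t - δ * (u t) ^ 2 - (u t) ^ 3) t) ∧
    (∀ t : ℝ, (v t) ^ 2 / 2 - (u t) ^ 2 / 2 + δ * (u t) ^ 3 / 3 + (u t) ^ 4 / 4 = 0) ∧
    Tendsto (fun t => (u t, v t)) atTop (nhds (0, 0)) ∧
    Tendsto (fun t => (u t, v t)) atBot (nhds (0, 0)) :=
  homoclinic_orbits_P0_general δ α hα σ hσ u v hu hv
end

section
/- Let δ ≥ 0, α = √(2/(9 + 2δ²)), ψ = δ√2/3, φ = √(2δ² + 9)/3, and for σ ∈ {+1, −1} let u_σ(t) = 3σα/(cosh t + σαδ) and v_σ(t) = −3σα sinh t/(cosh t + σαδ)² parametrize the homoclinic orbit Γ₀^σ. Then the Melnikov integral I₂^σ(δ) = ∫_{−∞}^{∞} (u_σ(t) v_σ(t))² dt evaluates to I₂^σ(δ) = 16/15 + (23/3) ψ² + 7 ψ⁴ + 2 ψ φ² (3φ² + 4ψ²) arctan(ψ − σφ). -/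
open Real MeasureTheory Filter Topology

/-!
With `ψ = α δ φ` and `3 α φ = √2` the orbit reads `u = σ√2 / (φ cosh t + σψ)`, so the integrand is
`4 φ² sinh² t / (a cosh t + b)⁶` with `a = φ`, `b = σψ` and `a² - b² = 1`. Hermite reduction splits a
primitive of `sinh² t / (a cosh t + b)⁶` into a rational function of `cosh t`, `sinh t` and a multiple
of a primitive of `1 / (a cosh t + b)`; when `a² - b² = 1` the half-angle substitution gives the latter
as `½ arctan ((a - b) tanh (t / 2))`. The integrand is even and the primitive vanishes at `0`, so the
integral is twice the limit of the primitive at `+∞`.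
-/

theorem integral_eq_two_mul_of_even_of_hasDerivAt {f F : ℝ → ℝ} {ℓ : ℝ}
    (heven : ∀ t, f (-t) = f t) (hF : ∀ t, HasDerivAt F (f t) t) (hf : ∀ t, 0 ≤ f t)
    (htop : Tendsto F atTop (𝓝 ℓ)) :
    ∫ t, f t = 2 * (ℓ - F 0) := by
  have habs : (fun t => f |t|) = f := funext fun t => by
    rcases abs_choice t with h | h <;> rw [h]; exact heven t
  rw [← habs, integral_comp_abs,
    integral_Ioi_of_hasDerivAt_of_nonneg' (fun t _ => hF t) (fun t _ => hf t) htop]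

section CoshAffine

variable {a b : ℝ}

theorem mul_cosh_add_pos (ha : 0 < a) (hab : a ^ 2 - b ^ 2 = 1) (t : ℝ) :
    0 < a * cosh t + b := by
  have : |b| < a := abs_lt_of_sq_lt_sq (by linarith) ha.le
  nlinarith [one_le_cosh t, neg_abs_le b]

-- `sinh t / (cosh t + 1) = tanh (t / 2)`
theorem hasDerivAt_arctan_sub_mul_sinh_div (ha : 0 < a) (hab : a ^ 2 - b ^ 2 = 1) (t : ℝ) :
    HasDerivAt (fun t => arctan ((a - b) * sinh t / (cosh t + 1)))
      (1 / (2 * (a * cosh t + b))) t := by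
  have hD : a * cosh t + b ≠ 0 := (mul_cosh_add_pos ha hab t).ne'
  convert (((hasDerivAt_sinh t).const_mul (a - b)).fun_div
    ((hasDerivAt_cosh t).add_const 1) (by positivity)).arctan using 1
  field_simp
  linear_combination (-((a - b) ^ 2 + 2 * (a - b) * (a * cosh t + b))) * cosh_sq_sub_sinh_sq t
    - (cosh t + 1) ^ 2 * hab

theorem tendsto_mul_cosh_add_atTop (ha : 0 < a) :
    Tendsto (fun t => a * cosh t + b) atTop atTop := by
  refine tendsto_atTop_add_const_right _ b (Tendsto.const_mul_atTop ha ?_)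
  refine tendsto_atTop_mono (fun t => ?_) (tendsto_exp_atTop.atTop_div_const two_pos)
  rw [cosh_eq]
  linarith [exp_pos (-t)]

theorem tendsto_sinh_div_mul_cosh_add (ha : 0 < a) :
    Tendsto (fun t => sinh t / (a * cosh t + b)) atTop (𝓝 a⁻¹) := by
  have hD := tendsto_mul_cosh_add_atTop (b := b) ha
  have hlim : Tendsto (fun t => (1 - (b + a * exp (-t)) * (a * cosh t + b)⁻¹) / a) atTop
      (𝓝 ((1 - (b + a * 0) * 0) / a)) :=
    ((tendsto_const_nhds.add (tendsto_exp_neg_atTop_nhds_zero.const_mul a)).mul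
      hD.inv_tendsto_atTop).const_sub 1 |>.div_const a
  rw [mul_zero, sub_zero, one_div] at hlim
  refine hlim.congr' ?_
  filter_upwards [hD.eventually_gt_atTop 0] with t ht
  field_simp
  linear_combination a * cosh_sub_sinh t

theorem tendsto_arctan_mul_sinh_div_cosh_add_one (m : ℝ) :
    Tendsto (fun t => arctan (m * sinh t / (cosh t + 1))) atTop (𝓝 (arctan m)) := by
  have h := (tendsto_sinh_div_mul_cosh_add (a := 1) (b := 1) one_pos).const_mul m
  simp only [one_mul, inv_one, mul_one, ← mul_div_assoc] at h
  exact (continuous_arctan.tendsto m).comp h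

-- The rational part of a primitive of `sinh² t / (a cosh t + b)⁶`, found by Hermite reduction.
noncomputable def sinhSqRationalPrimitive (a b t : ℝ) : ℝ :=
  sinh t * ((16 * a ^ 4 + 83 * a ^ 2 * b ^ 2 + 6 * b ^ 4) * (a * cosh t + b) ^ 4
      - b * (29 * a ^ 2 + 6 * b ^ 2) * (a ^ 2 - b ^ 2) * (a * cosh t + b) ^ 3
      + 2 * (4 * a ^ 2 + 3 * b ^ 2) * (a ^ 2 - b ^ 2) ^ 2 * (a * cosh t + b) ^ 2
      - 6 * b * (a ^ 2 - b ^ 2) ^ 3 * (a * cosh t + b) - 24 * (a ^ 2 - b ^ 2) ^ 4)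
    / (120 * a * (a ^ 2 - b ^ 2) ^ 4 * (a * cosh t + b) ^ 5)

theorem hasDerivAt_sinhSqRationalPrimitive {t : ℝ} (ha : a ≠ 0) (hab : a ^ 2 - b ^ 2 ≠ 0)
    (hD : a * cosh t + b ≠ 0) :
    HasDerivAt (sinhSqRationalPrimitive a b) (sinh t ^ 2 / (a * cosh t + b) ^ 6
      + b * (3 * a ^ 2 + 4 * b ^ 2) / (8 * (a ^ 2 - b ^ 2) ^ 4 * (a * cosh t + b))) t := by
  have hd : HasDerivAt (fun t => a * cosh t + b) (a * sinh t) t :=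
    ((hasDerivAt_cosh t).const_mul a).add_const b
  have hN := (((((hd.fun_pow 4).const_mul (16 * a ^ 4 + 83 * a ^ 2 * b ^ 2 + 6 * b ^ 4)).fun_sub
    ((hd.fun_pow 3).const_mul (b * (29 * a ^ 2 + 6 * b ^ 2) * (a ^ 2 - b ^ 2)))).fun_add
    ((hd.fun_pow 2).const_mul (2 * (4 * a ^ 2 + 3 * b ^ 2) * (a ^ 2 - b ^ 2) ^ 2))).fun_sub
    (hd.const_mul (6 * b * (a ^ 2 - b ^ 2) ^ 3))).sub_const (24 * (a ^ 2 - b ^ 2) ^ 4)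
  refine (((hasDerivAt_sinh t).fun_mul hN).fun_div
    ((hd.fun_pow 5).const_mul (120 * a * (a ^ 2 - b ^ 2) ^ 4)) (by simp [*])).congr_deriv ?_
  simp only [Nat.cast_ofNat, Nat.reduceSub, pow_one]
  field_simp
  rw [sinh_sq]
  ring

theorem tendsto_sinhSqRationalPrimitive_atTop (ha : 0 < a) :
    Tendsto (sinhSqRationalPrimitive a b) atTop
      (𝓝 ((16 * a ^ 4 + 83 * a ^ 2 * b ^ 2 + 6 * b ^ 4) / (120 * a ^ 2 * (a ^ 2 - b ^ 2) ^ 4))) := by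
  have hD := tendsto_mul_cosh_add_atTop (b := b) ha
  set Δ := a ^ 2 - b ^ 2
  set P : ℝ → ℝ := fun x => (16 * a ^ 4 + 83 * a ^ 2 * b ^ 2 + 6 * b ^ 4)
    - b * (29 * a ^ 2 + 6 * b ^ 2) * Δ * x + 2 * (4 * a ^ 2 + 3 * b ^ 2) * Δ ^ 2 * x ^ 2
    - 6 * b * Δ ^ 3 * x ^ 3 - 24 * Δ ^ 4 * x ^ 4 with hP
  have hPlim : Tendsto (fun t => P (a * cosh t + b)⁻¹) atTop (𝓝 (P 0)) :=
    ((show Continuous P by fun_prop).tendsto 0).comp hD.inv_tendsto_atTop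
  have hlim := ((tendsto_sinh_div_mul_cosh_add (b := b) ha).mul hPlim).div_const (120 * a * Δ ^ 4)
  convert hlim.congr' ?_ using 2
  · simp only [hP]
    field_simp
    ring
  filter_upwards [hD.eventually_gt_atTop 0] with t ht
  simp only [sinhSqRationalPrimitive, hP]
  field_simp
  ring

theorem integral_sinh_sq_div_mul_cosh_add_pow_six (ha : 0 < a) (hab : a ^ 2 - b ^ 2 = 1) :
    ∫ t, sinh t ^ 2 / (a * cosh t + b) ^ 6
      = (16 * a ^ 4 + 83 * a ^ 2 * b ^ 2 + 6 * b ^ 4) / (60 * a ^ 2)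
        - b * (3 * a ^ 2 + 4 * b ^ 2) / 2 * arctan (a - b) := by
  set K := b * (3 * a ^ 2 + 4 * b ^ 2) / 4
  set F := fun t => sinhSqRationalPrimitive a b t - K * arctan ((a - b) * sinh t / (cosh t + 1))
  have hF : ∀ t, HasDerivAt F (sinh t ^ 2 / (a * cosh t + b) ^ 6) t := fun t => by
    have hD := (mul_cosh_add_pos ha hab t).ne'
    refine ((hasDerivAt_sinhSqRationalPrimitive ha.ne' (by simp [hab]) hD).fun_sub
      ((hasDerivAt_arctan_sub_mul_sinh_div ha hab t).const_mul K)).congr_deriv ?_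
    rw [hab]
    field_simp
    ring
  have htop : Tendsto F atTop (𝓝 ((16 * a ^ 4 + 83 * a ^ 2 * b ^ 2 + 6 * b ^ 4)
      / (120 * a ^ 2 * (a ^ 2 - b ^ 2) ^ 4) - K * arctan (a - b))) :=
    (tendsto_sinhSqRationalPrimitive_atTop ha).sub
      ((tendsto_arctan_mul_sinh_div_cosh_add_one (a - b)).const_mul K)
  have hF0 : F 0 = 0 := by simp [F, sinhSqRationalPrimitive]
  rw [integral_eq_two_mul_of_even_of_hasDerivAt (fun t => by simp) hF (fun t => by positivity)
    htop, hF0, hab]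
  field_simp
  ring

end CoshAffine

theorem arctan_mul_of_eq_one_or_eq_neg_one {σ : ℝ} (hσ : σ = 1 ∨ σ = -1) (x : ℝ) :
    arctan (σ * x) = σ * arctan x := by
  rcases hσ with rfl | rfl <;> simp [arctan_neg]

namespace Melnikov

theorem three_mul_alpha_mul_phi {δ α φ : ℝ} (hα : α = √(2 / (9 + 2 * δ ^ 2)))
    (hφ : φ = √(2 * δ ^ 2 + 9) / 3) : 3 * α * φ = √2 := by
  rw [hα, hφ, mul_comm 3, mul_assoc, mul_div_cancel₀ _ three_ne_zero, ← sqrt_mul (by positivity)]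
  congr 1
  field_simp
  ring

theorem phi_sq_sub_psi_sq {δ ψ φ : ℝ} (hψ : ψ = δ * √2 / 3) (hφ : φ = √(2 * δ ^ 2 + 9) / 3) :
    φ ^ 2 - ψ ^ 2 = 1 := by
  rw [hφ, hψ, div_pow, div_pow, mul_pow, sq_sqrt (by positivity), sq_sqrt zero_le_two]
  ring

theorem sq_u_mul_v {α δ φ σ t : ℝ} (hσ : σ ^ 2 = 1) (hαφ : 3 * α * φ = √2)
    (hD : cosh t + σ * α * δ ≠ 0) :
    (3 * σ * α / (cosh t + σ * α * δ) * (-(3 * σ * α * sinh t) / (cosh t + σ * α * δ) ^ 2)) ^ 2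
      = 4 * φ ^ 2 * (sinh t ^ 2 / (φ * (cosh t + σ * α * δ)) ^ 6) := by
  have hφ : φ ≠ 0 := by
    rintro rfl
    exact (sqrt_ne_zero'.2 two_pos) (by simpa using hαφ.symm)
  have h4 : (3 * α * φ) ^ 4 * (σ ^ 2) ^ 2 = 4 := by
    rw [hαφ, hσ, show (4 : ℕ) = 2 * 2 from rfl, pow_mul, sq_sqrt zero_le_two]
    norm_num
  field_simp
  linear_combination sinh t ^ 2 * h4

end Melnikov

theorem melnikov_integral_I2_general (δ : ℝ)
    (α ψ φ : ℝ)
    (hα : α = Real.sqrt (2 / (9 + 2 * δ ^ 2)))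
    (hψ : ψ = δ * Real.sqrt 2 / 3)
    (hφ : φ = Real.sqrt (2 * δ ^ 2 + 9) / 3)
    (σ : ℝ) (hσ : σ = 1 ∨ σ = -1)
    (u v : ℝ → ℝ)
    (hu : ∀ t : ℝ, u t = 3 * σ * α / (Real.cosh t + σ * α * δ))
    (hv : ∀ t : ℝ, v t = -(3 * σ * α * Real.sinh t) / (Real.cosh t + σ * α * δ) ^ 2) :
    ∫ t : ℝ, (u t * v t) ^ 2
      = 16 / 15 + 23 / 3 * ψ ^ 2 + 7 * ψ ^ 4
        + 2 * ψ * φ ^ 2 * (3 * φ ^ 2 + 4 * ψ ^ 2) * Real.arctan (ψ - σ * φ) := by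
  have hσ2 : σ ^ 2 = 1 := by rcases hσ with rfl | rfl <;> norm_num
  have hφ0 : 0 < φ := by rw [hφ]; positivity
  have hαφ := Melnikov.three_mul_alpha_mul_phi hα hφ
  have hσψ2 : (σ * ψ) ^ 2 = ψ ^ 2 := by rw [mul_pow, hσ2, one_mul]
  have hφψ : φ ^ 2 - (σ * ψ) ^ 2 = 1 := hσψ2 ▸ Melnikov.phi_sq_sub_psi_sq hψ hφ
  have hD : ∀ t, φ * cosh t + σ * ψ = φ * (cosh t + σ * α * δ) := fun t => by
    rw [hψ, ← hαφ]; ring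
  have hintegrand : ∀ t, (u t * v t) ^ 2
      = 4 * φ ^ 2 * (sinh t ^ 2 / (φ * cosh t + σ * ψ) ^ 6) := fun t => by
    have hpos := mul_cosh_add_pos hφ0 hφψ t
    rw [hD] at hpos ⊢
    rw [hu, hv]
    exact Melnikov.sq_u_mul_v hσ2 hαφ (pos_of_mul_pos_right hpos hφ0.le).ne'
  have harctan : arctan (ψ - σ * φ) = -σ * arctan (φ - σ * ψ) := by
    rw [← arctan_mul_of_eq_one_or_eq_neg_one (by rcases hσ with rfl | rfl <;> norm_num)]
    congr 1
    linear_combination -ψ * hσ2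
  simp_rw [hintegrand]
  rw [integral_const_mul, integral_sinh_sq_div_mul_cosh_add_pow_six hφ0 hφψ, harctan,
    show (σ * ψ) ^ 4 = ((σ * ψ) ^ 2) ^ 2 by ring, hσψ2]
  field_simp
  linear_combination 360 * (16 * (φ ^ 2 + 1 + ψ ^ 2) + 83 * ψ ^ 2) * (hφψ + hσψ2)

/-- The Melnikov integral `I₂^σ(δ) = ∫ (u_σ v_σ)² dt` along the homoclinic
orbit `Γ₀^σ` of the Hamiltonian system `u̇ = v, v̇ = u − δ u² − u³` evaluates
to `16/15 + (23/3)ψ² + 7ψ⁴ + 2ψφ²(3φ² + 4ψ²) arctan(ψ − σφ)`, where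
`ψ = δ√2/3`, `φ = √(2δ²+9)/3`. -/
theorem melnikov_integral_I2 (δ : ℝ) (hδ : 0 ≤ δ)
    (α ψ φ : ℝ)
    (hα : α = Real.sqrt (2 / (9 + 2 * δ ^ 2)))
    (hψ : ψ = δ * Real.sqrt 2 / 3)
    (hφ : φ = Real.sqrt (2 * δ ^ 2 + 9) / 3)
    (σ : ℝ) (hσ : σ = 1 ∨ σ = -1)
    (u v : ℝ → ℝ)
    (hu : ∀ t : ℝ, u t = 3 * σ * α / (Real.cosh t + σ * α * δ))
    (hv : ∀ t : ℝ, v t = -(3 * σ * α * Real.sinh t) / (Real.cosh t + σ * α * δ) ^ 2) :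
    ∫ t : ℝ, (u t * v t) ^ 2
      = 16 / 15 + 23 / 3 * ψ ^ 2 + 7 * ψ ^ 4
        + 2 * ψ * φ ^ 2 * (3 * φ ^ 2 + 4 * ψ ^ 2) * Real.arctan (ψ - σ * φ) :=
  melnikov_integral_I2_general δ α ψ φ hα hψ hφ σ hσ u v hu hv
end

section
/- For any x* ∈ ℝ, the Jacobian matrix of the Maasch–Saltzman system ẋ = −x − y, ẏ = r y − p z + s z² − y z², ż = −q x − q z evaluated at the point P = (x*, −x*, −x*) has characteristic polynomial λ³ + b λ² + c λ + d, where b = 1 + q − r + (x*)², c = q − (1 + q) r + (1 + q)(x*)², and d = q [ p − r + 2 s x* + 3 (x*)² ]. -/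
/-!
At `P = (x*, -x*, -x*)` the entry `-p + 2 s z - 2 y z` of the Jacobian becomes
`-p - 2 s x* - 2 (x*)²`. Up to sign, the coefficients of the characteristic polynomial of a
`3 × 3` matrix are its trace, the sum of its principal `2 × 2` minors and its determinant, and for
this Jacobian these are `b`, `c` and `d`.
-/

open Matrix Polynomial

theorem Matrix.charpoly_fin_three {R : Type*} [CommRing R] (M : Matrix (Fin 3) (Fin 3) R) :
    M.charpoly = X ^ 3 - C M.trace * X ^ 2
      + C (M 0 0 * M 1 1 - M 0 1 * M 1 0 + M 0 0 * M 2 2 - M 0 2 * M 2 0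
        + M 1 1 * M 2 2 - M 1 2 * M 2 1) * X
      - C M.det := by
  rw [charpoly, det_fin_three, trace_fin_three, det_fin_three]
  simp only [charmatrix_apply, diagonal_apply, Fin.reduceEq, if_true, if_false, map_add, map_sub,
    map_mul]
  ring

noncomputable def maaschSaltzman (p q r s : ℝ) (v : Fin 3 → ℝ) : Fin 3 → ℝ :=
  ![-(v 0) - v 1,
    r * v 1 - p * v 2 + s * (v 2) ^ 2 - v 1 * (v 2) ^ 2,
    -(q * v 0) - q * v 2]

def maaschSaltzmanJacobian (p q r s : ℝ) (v : Fin 3 → ℝ) : Matrix (Fin 3) (Fin 3) ℝ :=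
  !![-1, -1, 0;
     0, r - v 2 ^ 2, -p + 2 * s * v 2 - 2 * v 1 * v 2;
     -q, 0, -q]

theorem hasFDerivAt_maaschSaltzman (p q r s : ℝ) (a : Fin 3 → ℝ) :
    HasFDerivAt (maaschSaltzman p q r s)
      (maaschSaltzmanJacobian p q r s a).mulVecLin.toContinuousLinearMap a := by
  have h0 := hasFDerivAt_apply (𝕜 := ℝ) (0 : Fin 3) a
  have h1 := hasFDerivAt_apply (𝕜 := ℝ) (1 : Fin 3) a
  have h2 := hasFDerivAt_apply (𝕜 := ℝ) (2 : Fin 3) a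
  have hx := h0.neg.sub h1
  have hy := (((h1.const_mul r).sub (h2.const_mul p)).add ((h2.pow 2).const_mul s)).sub
    (h1.mul (h2.pow 2))
  have hz := (h0.const_mul q).neg.sub (h2.const_mul q)
  rw [hasFDerivAt_pi']
  intro i
  fin_cases i
  on_goal 1 => refine hx.congr_fderiv ?_
  on_goal 2 => refine hy.congr_fderiv ?_
  on_goal 3 => refine hz.congr_fderiv ?_
  all_goals
    ext w
    simp only [maaschSaltzmanJacobian, ContinuousLinearMap.comp_apply, ContinuousLinearMap.proj_apply,
      LinearMap.coe_toContinuousLinearMap', mulVecBilin_apply, cons_mulVec, empty_mulVec, dotProduct,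
      Fin.sum_univ_three, cons_val_zero, cons_val_one, cons_val, Fin.zero_eta, Fin.mk_one,
      Fin.reduceFinMk, _root_.sub_apply, _root_.neg_apply, _root_.add_apply, _root_.smul_apply,
      smul_eq_mul, nsmul_eq_mul, Nat.add_one_sub_one, pow_one]
    ring

/-- The characteristic polynomial of the Jacobian of the Maasch–Saltzman
system `ẋ = −x − y, ẏ = r y − p z + s z² − y z², ż = −q x − q z` at any point
`P = (x*, −x*, −x*)` is `λ³ + b λ² + c λ + d` with `b = 1 + q − r + (x*)²`,
`c = q − (1+q) r + (1+q)(x*)²`, `d = q(p − r + 2 s x* + 3 (x*)²)`. -/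
theorem MS_charpoly (p q r s xstar : ℝ)
    (F : (Fin 3 → ℝ) → (Fin 3 → ℝ))
    (hF : ∀ v : Fin 3 → ℝ,
      F v = ![-(v 0) - v 1,
              r * v 1 - p * v 2 + s * (v 2) ^ 2 - v 1 * (v 2) ^ 2,
              -(q * v 0) - q * v 2])
    (J : Matrix (Fin 3) (Fin 3) ℝ)
    (hJ : J = !![-1, -1, 0;
                 0, r - xstar ^ 2, -p - 2 * s * xstar - 2 * xstar ^ 2;
                 -q, 0, -q]) :
    (∀ v : Fin 3 → ℝ, fderiv ℝ F ![xstar, -xstar, -xstar] v = J.mulVec v) ∧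
    J.charpoly
      = X ^ 3 + C (1 + q - r + xstar ^ 2) * X ^ 2
        + C (q - (1 + q) * r + (1 + q) * xstar ^ 2) * X
        + C (q * (p - r + 2 * s * xstar + 3 * xstar ^ 2)) := by
  have hJ_eq : J = maaschSaltzmanJacobian p q r s ![xstar, -xstar, -xstar] := by
    rw [hJ, maaschSaltzmanJacobian]
    simp only [cons_val, cons_val_one, cons_val_zero, even_two, Even.neg_pow, mul_neg, neg_mul,
      neg_neg, EmbeddingLike.apply_eq_iff_eq, vecCons_inj, and_true, true_and]
    ring
  refine ⟨fun v => ?_, ?_⟩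
  · rw [show F = maaschSaltzman p q r s from funext hF,
      (hasFDerivAt_maaschSaltzman p q r s _).fderiv, hJ_eq]
    rfl
  · rw [hJ, charpoly_fin_three, trace_fin_three, det_fin_three]
    simp only [of_apply, cons_val', cons_val_zero, cons_val_fin_one, cons_val_one, cons_val,
      map_zero, map_one, map_ofNat, map_add, map_neg, map_sub, map_mul, map_pow]
    ring
end

section
/- Let q > 0 and q/(1+q) < p < 1 + q, and define f₀(p) = (1+q)/2 − √((q−1)²/4 + q p/(1+q)). Then r := f₀(p) satisfies 0 < r < q/(1+q) and solves the equation (1 + q − r)(q − (1+q) r) = q (p − r) (i.e., e₀ = b₀ c₀ − d₀ = 0), so (p, f₀(p)) lies on the lower branch of the Hopf-bifurcation parabola e₀ of P₀. Moreover f₀ is strictly decreasing on the interval (q/(1+q), 1+q). -/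
/-!
As a polynomial in `r`, `e₀ = (1 + q) ((r - (1 + q)/2)² - Δ(p))` with
`Δ(p) = (q - 1)²/4 + q p/(1 + q)`, so `f₀(p) = (1 + q)/2 - √Δ(p)` is its smaller root.
Both bounds on `f₀(p)` reduce to comparing `Δ(p)` with a square:
`((1 + q)/2)² - Δ(p) = q (1 + q - p)/(1 + q)` gives `f₀(p) > 0` exactly when `p < 1 + q`, and
`Δ(p) - ((1 + q)/2 - q/(1 + q))² = q/(1 + q) · (p - q/(1 + q))` gives `f₀(p) < q/(1 + q)`
exactly when `p > q/(1 + q)`. Monotonicity holds because `Δ` is increasing in `p`.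
-/

open Real Set

lemma sub_sqrt_pos_iff {h D : ℝ} (hh : 0 < h) : 0 < h - √D ↔ D < h ^ 2 := by
  rw [sub_pos, sqrt_lt' hh]

lemma sub_sqrt_lt_iff {h D x : ℝ} (hx : x ≤ h) : h - √D < x ↔ (h - x) ^ 2 < D := by
  rw [sub_lt_comm, lt_sqrt (sub_nonneg.2 hx)]

lemma StrictMonoOn.const_sub_sqrt {α : Type*} [Preorder α] {g : α → ℝ} {s : Set α}
    (hg : StrictMonoOn g s) (hg0 : ∀ x ∈ s, 0 ≤ g x) (c : ℝ) :
    StrictAntiOn (fun x => c - √(g x)) s := fun _ ha _ hb hab =>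
  sub_lt_sub_left (sqrt_lt_sqrt (hg0 _ ha) (hg ha hb hab)) c

namespace MaaschSaltzman

noncomputable def hopfDiscr (q p : ℝ) : ℝ := (q - 1) ^ 2 / 4 + q * p / (1 + q)

variable {q : ℝ}

lemma hopf_quadratic_eq (hq : 1 + q ≠ 0) (p r : ℝ) :
    (1 + q - r) * (q - (1 + q) * r) - q * (p - r)
      = (1 + q) * ((r - (1 + q) / 2) ^ 2 - hopfDiscr q p) := by
  unfold hopfDiscr
  field_simp
  ring

lemma sq_half_sub_hopfDiscr (hq : 1 + q ≠ 0) (p : ℝ) :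
    ((1 + q) / 2) ^ 2 - hopfDiscr q p = q * (1 + q - p) / (1 + q) := by
  unfold hopfDiscr
  field_simp
  ring

lemma hopfDiscr_sub_sq (hq : 1 + q ≠ 0) (p : ℝ) :
    hopfDiscr q p - ((1 + q) / 2 - q / (1 + q)) ^ 2 = q / (1 + q) * (p - q / (1 + q)) := by
  unfold hopfDiscr
  field_simp
  ring

lemma hopfDiscr_nonneg (hq : 0 < q) {p : ℝ} (hp : 0 ≤ p) : 0 ≤ hopfDiscr q p := by
  unfold hopfDiscr
  positivity

lemma hopfDiscr_strictMono (hq : 0 < q) : StrictMono (hopfDiscr q) := fun a b hab => by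
  unfold hopfDiscr
  gcongr

lemma div_one_add_le_half_one_add (hq : 0 ≤ q) : q / (1 + q) ≤ (1 + q) / 2 := by
  rw [div_le_div_iff₀ (by positivity) two_pos]
  nlinarith [sq_nonneg q]

end MaaschSaltzman

open MaaschSaltzman in
/-- The lower branch `f₀` of the Hopf-bifurcation parabola `e₀` of `P₀` for
the Maasch–Saltzman system: for `q > 0` and `q/(1+q) < p < 1 + q`, the value
`r = f₀(p) = (1+q)/2 − √((q−1)²/4 + q p/(1+q))` satisfies `0 < r < q/(1+q)`
and solves `(1 + q − r)(q − (1+q) r) = q(p − r)`; moreover `f₀` is strictly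
decreasing on `(q/(1+q), 1+q)`. -/
theorem hopf_curve_lower_branch (q : ℝ) (hq : 0 < q)
    (f0 : ℝ → ℝ)
    (hf0 : ∀ p : ℝ, f0 p
      = (1 + q) / 2 - Real.sqrt ((q - 1) ^ 2 / 4 + q * p / (1 + q)))
    (p : ℝ) (hp1 : q / (1 + q) < p) (hp2 : p < 1 + q) :
    0 < f0 p ∧
    f0 p < q / (1 + q) ∧
    (1 + q - f0 p) * (q - (1 + q) * f0 p) = q * (p - f0 p) ∧
    StrictAntiOn f0 (Set.Ioo (q / (1 + q)) (1 + q)) := by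
  have hq1 : 0 < 1 + q := by linarith
  have hf : f0 = fun p => (1 + q) / 2 - √(hopfDiscr q p) := funext hf0
  have hpos : ∀ p ∈ Ioo (q / (1 + q)) (1 + q), 0 ≤ p := fun p hp =>
    (div_pos hq hq1).le.trans hp.1.le
  subst hf
  refine ⟨?_, ?_, ?_, ?_⟩
  · rw [sub_sqrt_pos_iff (by positivity), ← sub_pos, sq_half_sub_hopfDiscr hq1.ne']
    exact div_pos (mul_pos hq (sub_pos.2 hp2)) hq1
  · rw [sub_sqrt_lt_iff (div_one_add_le_half_one_add hq.le), ← sub_pos,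
      hopfDiscr_sub_sq hq1.ne']
    exact mul_pos (div_pos hq hq1) (sub_pos.2 hp1)
  · rw [← sub_eq_zero, hopf_quadratic_eq hq1.ne', sub_sub_cancel_left, neg_sq,
      sq_sqrt (hopfDiscr_nonneg hq (hpos p ⟨hp1, hp2⟩)), sub_self, mul_zero]
  · exact ((hopfDiscr_strictMono hq).strictMonoOn _).const_sub_sqrt
      (fun p hp => hopfDiscr_nonneg hq (hpos p hp)) _
end
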